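/- arXiv:2101.00207 — 2 statements merged into one kernel-verified Lean document; each statement's English description precedes it below -/
import Mathlib

section
/- Let E be a Dedekind complete Riesz space. If a sequence (f_n) in E order converges to f, then the Cesàro averages (1/n)·∑_{k=0}^{n-1} f_k order converge to f as n → ∞. -/
/-!
If `|f n - x| ≤ u m` for `n ≥ N m`, then for `n ≥ N m` the Cesàro mean is within
`u m + C m / n` of `x`, where `C m = ∑ k < N m, |f k - x|`. The diagonal infima
`min_{m ≤ j} (u m + C m / (j + 1))` decrease to `0`, because a Dedekind complete space is
Archimedean, and they dominate the tails of the Cesàro means.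
-/

open Finset

section Defs

variable {E : Type*} [ConditionallyCompleteLattice E] [AddCommGroup E] [Module ℝ E]
  [CovariantClass E E (· + ·) (· ≤ ·)]

/-- Order convergence of a sequence: there is a sequence `u ↓ 0` dominating the tails. -/
def OrderConvergesTo (f : ℕ → E) (x : E) : Prop :=
  ∃ u : ℕ → E, Antitone u ∧ IsGLB (Set.range u) (0 : E) ∧
    ∀ m : ℕ, ∃ N : ℕ, ∀ n ≥ N, |f n - x| ≤ u m

/-- `p` is a component of `e`. -/
def IsComponent (e p : E) : Prop := 0 ≤ p ∧ p ≤ e ∧ p ⊓ (e - p) = 0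

/-- A sequence of components is of density zero if its Cesàro means order converge to `0`. -/
def DensityZero (p : ℕ → E) : Prop :=
  OrderConvergesTo (fun n => (n : ℝ)⁻¹ • ∑ k ∈ Finset.range n, p k) (0 : E)

/-- The band projection (onto the band generated by `p`) applied to a positive element `f`. -/
noncomputable def bandProj (p f : E) : E :=
  sSup (Set.range fun n : ℕ => f ⊓ (n : ℝ) • p)

end Defs

section Systems

variable (E : Type*) [ConditionallyCompleteLattice E] [AddCommGroup E] [Module ℝ E]
  [CovariantClass E E (· + ·) (· ≤ ·)]

/-- The data of a conditional expectation preserving system, without the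
intertwining identity `T S = T`: a Dedekind complete Riesz space with weak order unit `e`,
the `f`-algebra multiplication of `E_e` (with unit `e`), a strictly-positive-free
conditional expectation operator `T` with `T e = e`, and a Riesz homomorphism `S`
with `S e = e`. -/
structure PreCEPS where
  e : E
  e_pos : 0 < e
  weakUnit : ∀ x : E, e ⊓ |x| = 0 → x = 0
  /-- the `f`-algebra multiplication (of the ideal generated by `e`) -/
  mul : E →ₗ[ℝ] E →ₗ[ℝ] E
  mul_comm' : ∀ x y, mul x y = mul y x
  mul_pos' : ∀ x y, 0 ≤ x → 0 ≤ y → 0 ≤ mul x y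
  one_mul' : ∀ x, mul e x = x
  finf' : ∀ x y z, x ⊓ y = 0 → 0 ≤ z → (mul x z) ⊓ y = 0
  /-- the conditional expectation operator -/
  T : E →ₗ[ℝ] E
  T_pos : ∀ x, 0 ≤ x → 0 ≤ T x
  T_proj : ∀ x, T (T x) = T x
  T_e : T e = e
  T_oc : ∀ (s : Set E) (x : E), s.Nonempty → DirectedOn (· ≤ ·) s → IsLUB s x →
    IsLUB (T '' s) (T x)
  T_range_closed : ∀ (s : Set E) (x : E), (∀ y ∈ s, T y = y) → IsLUB s x → T x = x
  /-- the Riesz homomorphism -/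
  S : E →ₗ[ℝ] E
  S_sup : ∀ x y, S (x ⊔ y) = S x ⊔ S y
  S_e : S e = e

/-- A conditional expectation preserving system. -/
structure CEPS extends PreCEPS E where
  TS : ∀ x, T (S x) = T x

variable {E}

/-- Strict positivity of the conditional expectation operator of a system. -/
def CEPS.StrictPos (A : CEPS E) : Prop := ∀ x : E, 0 ≤ x → A.T x = 0 → x = 0

/-- Ergodicity, characterised by Cesàro convergence of
`T((S^k p)·q)` to `Tp·Tq` for all components `p, q` of `e`. -/
def CEPS.Ergodic (A : CEPS E) : Prop :=
  ∀ p q : E, IsComponent A.e p → IsComponent A.e q →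
    OrderConvergesTo
      (fun n => (n : ℝ)⁻¹ • ∑ k ∈ Finset.range n, A.T (A.mul ((A.S ^ k) p) q))
      (A.mul (A.T p) (A.T q))

/-- Conditional weak mixing. -/
def CEPS.WeakMixing (A : CEPS E) : Prop :=
  ∀ p q : E, IsComponent A.e p → IsComponent A.e q →
    OrderConvergesTo
      (fun n => (n : ℝ)⁻¹ • ∑ k ∈ Finset.range n,
        |A.T (A.mul ((A.S ^ k) p) q) - A.mul (A.T p) (A.T q)|) (0 : E)

end Systems

section Tensor

variable {E F G : Type*}
  [ConditionallyCompleteLattice E] [AddCommGroup E] [Module ℝ E]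
  [CovariantClass E E (· + ·) (· ≤ ·)]
  [ConditionallyCompleteLattice F] [AddCommGroup F] [Module ℝ F]
  [CovariantClass F F (· + ·) (· ≤ ·)]
  [ConditionallyCompleteLattice G] [AddCommGroup G] [Module ℝ G]
  [CovariantClass G G (· + ·) (· ≤ ·)]

/-- A realisation of the Dedekind completion of the Fremlin tensor product of the
underlying spaces of two conditional expectation preserving systems, carrying the
pre-system structure (Grobler's tensor product conditional expectation and the tensor
product Riesz homomorphism), but without the intertwining identity for the product. -/
structure TensorPreCEPS (A : CEPS E) (B : CEPS F) (G : Type*)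
    [ConditionallyCompleteLattice G] [AddCommGroup G] [Module ℝ G]
    [CovariantClass G G (· + ·) (· ≤ ·)] where
  sys : PreCEPS G
  tmul : E →ₗ[ℝ] F →ₗ[ℝ] G
  tmul_pos : ∀ x y, 0 ≤ x → 0 ≤ y → 0 ≤ tmul x y
  e_def : sys.e = tmul A.e B.e
  T_tmul : ∀ x y, sys.T (tmul x y) = tmul (A.T x) (B.T y)
  S_tmul : ∀ x y, sys.S (tmul x y) = tmul (A.S x) (B.S y)
  mul_tmul : ∀ x y x' y',
    sys.mul (tmul x y) (tmul x' y') = tmul (A.mul x x') (B.mul y y')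
  comp_dense : ∀ u : G, IsComponent sys.e u →
    IsLUB {w : G | ∃ p q, IsComponent A.e p ∧ IsComponent B.e q ∧
      tmul p q ≤ u ∧ w = tmul p q} u
  tmul_oc_left : ∀ (x : ℕ → E) (a : E) (y : F), 0 ≤ y →
    OrderConvergesTo x a → OrderConvergesTo (fun n => tmul (x n) y) (tmul a y)
  tmul_oc_right : ∀ (x : E) (y : ℕ → F) (b : F), 0 ≤ x →
    OrderConvergesTo y b → OrderConvergesTo (fun n => tmul x (y n)) (tmul x b)

/-- As `TensorPreCEPS`, but where the tensor product system is a full conditional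
expectation preserving system. -/
structure TensorCEPS (A : CEPS E) (B : CEPS F) (G : Type*)
    [ConditionallyCompleteLattice G] [AddCommGroup G] [Module ℝ G]
    [CovariantClass G G (· + ·) (· ≤ ·)] where
  sys : CEPS G
  tmul : E →ₗ[ℝ] F →ₗ[ℝ] G
  tmul_pos : ∀ x y, 0 ≤ x → 0 ≤ y → 0 ≤ tmul x y
  e_def : sys.e = tmul A.e B.e
  T_tmul : ∀ x y, sys.T (tmul x y) = tmul (A.T x) (B.T y)
  S_tmul : ∀ x y, sys.S (tmul x y) = tmul (A.S x) (B.S y)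
  mul_tmul : ∀ x y x' y',
    sys.mul (tmul x y) (tmul x' y') = tmul (A.mul x x') (B.mul y y')
  comp_dense : ∀ u : G, IsComponent sys.e u →
    IsLUB {w : G | ∃ p q, IsComponent A.e p ∧ IsComponent B.e q ∧
      tmul p q ≤ u ∧ w = tmul p q} u
  tmul_oc_left : ∀ (x : ℕ → E) (a : E) (y : F), 0 ≤ y →
    OrderConvergesTo x a → OrderConvergesTo (fun n => tmul (x n) y) (tmul a y)
  tmul_oc_right : ∀ (x : E) (y : ℕ → F) (b : F), 0 ≤ x →
    OrderConvergesTo y b → OrderConvergesTo (fun n => tmul x (y n)) (tmul x b)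

end Tensor

theorem abs_sum_le_sum_abs_of_lattice {ι α : Type*} [Lattice α] [AddCommGroup α] [AddLeftMono α]
    (f : ι → α) (s : Finset ι) : |∑ i ∈ s, f i| ≤ ∑ i ∈ s, |f i| :=
  haveI : IsOrderedAddMonoid α :=
    ⟨fun _ _ h c => add_le_add_left h c, fun _ _ h c => add_le_add_right h c⟩
  le_sum_of_subadditive _ abs_zero.le abs_add_le s f

section LatticeOrderedGroup

variable {α : Type*} [Lattice α] [AddCommGroup α] [AddLeftMono α]

theorem add_inf_eq_zero {a b c : α} (hac : a ⊓ c = 0) (hbc : b ⊓ c = 0) : (a + b) ⊓ c = 0 := by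
  have ha : 0 ≤ a := hac ▸ inf_le_left
  have hb : 0 ≤ b := hbc ▸ inf_le_left
  have hc : 0 ≤ c := hac ▸ inf_le_right
  refine le_antisymm ?_ (le_inf (add_nonneg ha hb) hc)
  calc (a + b) ⊓ c ≤ b ⊓ c := by
        refine le_inf ?_ inf_le_right
        calc (a + b) ⊓ c ≤ (a + b) ⊓ (c + b) := inf_le_inf_left _ (le_add_of_nonneg_right hb)
          _ = b := by rw [← inf_add, hac, zero_add]
    _ = 0 := hbc

theorem nsmul_inf_eq_zero {a b : α} (h : a ⊓ b = 0) (n : ℕ) : (n • a) ⊓ b = 0 := by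
  induction n with
  | zero => simpa using (h ▸ inf_le_right : (0 : α) ≤ b)
  | succ n ih => rw [succ_nsmul]; exact add_inf_eq_zero ih h

theorem nonneg_of_nsmul_nonneg {a : α} {n : ℕ} (hn : n ≠ 0) (h : 0 ≤ n • a) : 0 ≤ a := by
  have hle : a⁻ ≤ n • a⁺ :=
    calc a⁻ ≤ n • a⁻ := le_self_nsmul (negPart_nonneg a) hn
      _ ≤ n • a⁺ := by rwa [← sub_nonneg, ← nsmul_sub, posPart_sub_negPart]
  have hdisj : (n • a⁺) ⊓ a⁻ = 0 := nsmul_inf_eq_zero (posPart_inf_negPart_eq_zero a) n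
  have hneg : a⁻ = 0 := le_antisymm (hdisj ▸ le_inf hle le_rfl) (negPart_nonneg a)
  exact negPart_eq_zero.1 hneg

end LatticeOrderedGroup

theorem nonpos_of_forall_succ_nsmul_le {α : Type*} [ConditionallyCompleteLattice α]
    [AddCommGroup α] [AddLeftMono α] {c d : α} (h : ∀ n : ℕ, (n + 1) • d ≤ c) : d ≤ 0 := by
  have hlub := isLUB_csSup (Set.range_nonempty fun n : ℕ => (n + 1) • d)
    ⟨c, Set.forall_mem_range.2 h⟩
  set s := sSup (Set.range fun n : ℕ => (n + 1) • d)
  have hs : s + d ≤ s := le_sub_iff_add_le.1 <| hlub.2 <| Set.forall_mem_range.2 fun n =>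
    le_sub_iff_add_le.2 <| succ_nsmul d (n + 1) ▸ hlub.1 ⟨n + 1, rfl⟩
  exact (add_le_iff_nonpos_right s).1 hs

section RealModule

variable {α : Type*} [Lattice α] [AddCommGroup α] [AddLeftMono α] [Module ℝ α]

theorem inv_natCast_smul_nonneg {a : α} (ha : 0 ≤ a) (n : ℕ) : 0 ≤ (n : ℝ)⁻¹ • a := by
  rcases eq_or_ne n 0 with rfl | hn
  · simp
  · refine nonneg_of_nsmul_nonneg hn ?_
    rwa [← Nat.cast_smul_eq_nsmul ℝ, smul_inv_smul₀ (Nat.cast_ne_zero.2 hn)]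

theorem inv_natCast_smul_mono (n : ℕ) : Monotone fun a : α => (n : ℝ)⁻¹ • a := fun a b h => by
  simpa only [smul_sub, sub_nonneg] using inv_natCast_smul_nonneg (sub_nonneg.2 h) n

theorem le_inv_natCast_smul_iff {a b : α} {n : ℕ} (hn : n ≠ 0) :
    a ≤ (n : ℝ)⁻¹ • b ↔ n • a ≤ b := by
  have hn' : (n : ℝ) ≠ 0 := Nat.cast_ne_zero.2 hn
  constructor
  · intro h
    simpa only [← Nat.cast_smul_eq_nsmul ℝ, smul_inv_smul₀ hn'] using nsmul_le_nsmul_right h n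
  · intro h
    simpa only [← Nat.cast_smul_eq_nsmul ℝ, inv_smul_smul₀ hn'] using inv_natCast_smul_mono n h

theorem abs_inv_natCast_smul_le (a : α) (n : ℕ) : |(n : ℝ)⁻¹ • a| ≤ (n : ℝ)⁻¹ • |a| :=
  abs_le'.2 ⟨inv_natCast_smul_mono n (le_abs_self a),
    smul_neg ((n : ℝ)⁻¹) a ▸ inv_natCast_smul_mono n (neg_le_abs a)⟩

theorem inv_natCast_smul_le_of_le {c : α} (hc : 0 ≤ c) {i k : ℕ} (hi : i ≠ 0) (hik : i ≤ k) :
    (k : ℝ)⁻¹ • c ≤ (i : ℝ)⁻¹ • c := by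
  have hk : k ≠ 0 := by omega
  have hdiff : (i : ℝ)⁻¹ - (k : ℝ)⁻¹ = ((i * k : ℕ) : ℝ)⁻¹ * ((k - i : ℕ) : ℝ) := by
    push_cast [Nat.cast_sub hik]
    field_simp
  rw [← sub_nonneg, ← sub_smul, hdiff, mul_smul, Nat.cast_smul_eq_nsmul]
  exact inv_natCast_smul_nonneg (nsmul_nonneg hc _) _

theorem abs_cesaro_sub_le {f : ℕ → α} {x u : α} {N n : ℕ} (hu : ∀ k ≥ N, |f k - x| ≤ u)
    (hNn : N ≤ n) (hn : n ≠ 0) :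
    |(n : ℝ)⁻¹ • ∑ k ∈ range n, f k - x| ≤ u + (n : ℝ)⁻¹ • ∑ k ∈ range N, |f k - x| := by
  have hn' : (n : ℝ) ≠ 0 := Nat.cast_ne_zero.2 hn
  have hu0 : 0 ≤ u := (abs_nonneg _).trans (hu n hNn)
  have htail : ∑ k ∈ Ico N n, |f k - x| ≤ n • u :=
    calc ∑ k ∈ Ico N n, |f k - x| ≤ ∑ _k ∈ Ico N n, u :=
          sum_le_sum fun k hk => hu k (mem_Ico.1 hk).1
      _ = (n - N) • u := by rw [sum_const, Nat.card_Ico]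
      _ ≤ n • u := nsmul_le_nsmul_left hu0 (Nat.sub_le n N)
  calc |(n : ℝ)⁻¹ • ∑ k ∈ range n, f k - x| = |(n : ℝ)⁻¹ • ∑ k ∈ range n, (f k - x)| := by
        rw [sum_sub_distrib, smul_sub, sum_const, card_range, ← Nat.cast_smul_eq_nsmul ℝ,
          inv_smul_smul₀ hn']
    _ ≤ (n : ℝ)⁻¹ • ∑ k ∈ range n, |f k - x| :=
        (abs_inv_natCast_smul_le _ n).trans
          (inv_natCast_smul_mono n (abs_sum_le_sum_abs_of_lattice _ _))
    _ ≤ (n : ℝ)⁻¹ • (∑ k ∈ range N, |f k - x| + n • u) := by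
        rw [← sum_range_add_sum_Ico _ hNn]
        exact inv_natCast_smul_mono n (add_le_add_right htail _)
    _ = u + (n : ℝ)⁻¹ • ∑ k ∈ range N, |f k - x| := by
        rw [smul_add, ← Nat.cast_smul_eq_nsmul ℝ, inv_smul_smul₀ hn', add_comm]

end RealModule

section DiagonalInfimum

variable {α : Type*} [Lattice α] [AddCommGroup α] [Module ℝ α] {u C : ℕ → α}

noncomputable def diagInf (u C : ℕ → α) (j : ℕ) : α :=
  (range (j + 1)).inf' nonempty_range_add_one fun m => u m + ((j + 1 : ℕ) : ℝ)⁻¹ • C m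

theorem diagInf_le {m j : ℕ} (hmj : m ≤ j) :
    diagInf u C j ≤ u m + ((j + 1 : ℕ) : ℝ)⁻¹ • C m :=
  inf'_le _ (mem_range.2 (Nat.lt_succ_of_le hmj))

variable [AddLeftMono α]

theorem antitone_diagInf (hC : ∀ m, 0 ≤ C m) : Antitone (diagInf u C) := fun j j' hjj' =>
  le_inf' _ _ fun m hm => (diagInf_le ((Nat.le_of_lt_succ (mem_range.1 hm)).trans hjj')).trans <|
    add_le_add_right (inv_natCast_smul_le_of_le (hC m) j.succ_ne_zero (by omega)) _

end DiagonalInfimum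

section OrderConvergence

variable {E : Type*} [ConditionallyCompleteLattice E] [AddCommGroup E] [AddLeftMono E]
  [Module ℝ E] {u C : ℕ → E}

theorem isGLB_diagInf (hu : IsGLB (Set.range u) 0) (hC : ∀ m, 0 ≤ C m) :
    IsGLB (Set.range (diagInf u C)) 0 := by
  refine ⟨Set.forall_mem_range.2 fun j => le_inf' _ _ fun m _ =>
    add_nonneg (hu.1 ⟨m, rfl⟩) (inv_natCast_smul_nonneg (hC m) _), fun b hb => ?_⟩
  refine hu.2 <| Set.forall_mem_range.2 fun m => sub_nonpos.1 <|
    nonpos_of_forall_succ_nsmul_le (c := C m) fun n => ?_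
  rw [← le_inv_natCast_smul_iff n.succ_ne_zero, sub_le_iff_le_add']
  calc b ≤ diagInf u C (max m n) := hb ⟨max m n, rfl⟩
    _ ≤ u m + ((max m n + 1 : ℕ) : ℝ)⁻¹ • C m := diagInf_le (le_max_left m n)
    _ ≤ u m + ((n + 1 : ℕ) : ℝ)⁻¹ • C m :=
        add_le_add_right (inv_natCast_smul_le_of_le (hC m) n.succ_ne_zero (by omega)) _

theorem orderConvergesTo_of_abs_sub_le {g : ℕ → E} {x : E} (N : ℕ → ℕ)
    (hu : IsGLB (Set.range u) 0) (hC : ∀ m, 0 ≤ C m)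
    (hg : ∀ m, ∀ n ≥ N m, |g n - x| ≤ u m + (n : ℝ)⁻¹ • C m) : OrderConvergesTo g x := by
  refine ⟨diagInf u C, antitone_diagInf hC, isGLB_diagInf hu hC, fun j =>
    ⟨max ((range (j + 1)).sup N) (j + 1), fun n hn => le_inf' _ _ fun m hm => ?_⟩⟩
  have hNm : N m ≤ n := (le_sup hm).trans ((le_max_left _ _).trans hn)
  exact (hg m n hNm).trans <|
    add_le_add_right (inv_natCast_smul_le_of_le (hC m) j.succ_ne_zero (le_of_max_le_right hn)) _

end OrderConvergence

/-- if `(f_n)` order converges to `f` in a Dedekind complete Riesz space,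
then the Cesàro averages `(1/n)·∑_{k<n} f_k` order converge to `f`. -/
theorem cesaro_of_orderConvergesTo
    {E : Type*} [ConditionallyCompleteLattice E] [AddCommGroup E] [Module ℝ E]
    [CovariantClass E E (· + ·) (· ≤ ·)]
    (f : ℕ → E) (x : E) (hf : OrderConvergesTo f x) :
    OrderConvergesTo (fun n => (n : ℝ)⁻¹ • ∑ k ∈ Finset.range n, f k) x := by
  obtain ⟨u, -, hu, hN⟩ := hf
  choose N hN using hN
  exact orderConvergesTo_of_abs_sub_le (fun m => N m + 1) hu
    (C := fun m => ∑ k ∈ range (N m), |f k - x|) (fun m => sum_nonneg fun k _ => abs_nonneg _)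
    fun m n hn => abs_cesaro_sub_le (hN m) (by omega) (by omega)
end

section
/- Let (E, T, S, e) be a conditional expectation preserving system. Then T S f = T f for all f ∈ E (not just for components of e). -/
open Finset

/-!
Write `D = T S - T`: it is linear and vanishes on the components of `e`, hence on their span.
For `0 ≤ v ≤ M e`, the band projection `p` of `e` onto the band of `(v - e)⁺` is a component with
`p ≤ v` and `e ⊓ (v - e)⁺ ≤ p`; recursing on `(v - e)⁺ ≤ (M - 1) e` gives a sum `s` of components
with `s ≤ v ≤ s + e` (a Freudenthal-type approximation with integer steps). For bounded `f ≥ 0`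
and `v = N f` this gives `N • D f = D w` with `0 ≤ w ≤ e`, so `-e ≤ N • D f ≤ e` for every `N`, and
`D f = 0` by the Archimedean property. An arbitrary `f ≥ 0` is the supremum of the `f ⊓ n e`
since `e` is a weak order unit; as `S (f ⊓ n e) = S f ⊓ n e`, order continuity of `T` carries
`D f = 0` over from the `f ⊓ n e` to `f`, and finally `f = f⁺ - f⁻`.
-/

section LatticeGroup

variable {E : Type*} [Lattice E] [AddCommGroup E] [AddLeftMono E]

lemma inf_add_le_inf_add_inf {a b c : E} (ha : 0 ≤ a) (hb : 0 ≤ b) (hc : 0 ≤ c) :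
    a ⊓ (b + c) ≤ a ⊓ b + a ⊓ c := by
  rw [← sub_le_iff_le_add', sub_eq_add_neg, neg_inf, add_sup]
  refine sup_le ?_ ?_
  · exact (add_neg_nonpos_iff_le.2 inf_le_left).trans (le_inf ha hc)
  · rw [← sub_eq_add_neg]
    refine le_inf ?_ ?_
    · exact sub_le_iff_le_add.2 (inf_le_left.trans (le_add_of_nonneg_right hb))
    · exact sub_le_iff_le_add'.2 inf_le_right

lemma inf_nsmul_le_nsmul_inf {a b : E} (ha : 0 ≤ a) (hb : 0 ≤ b) (n : ℕ) :
    a ⊓ n • b ≤ n • (a ⊓ b) := by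
  induction n with
  | zero => simp
  | succ n ih =>
    rw [succ_nsmul, succ_nsmul]
    calc a ⊓ (n • b + b) ≤ a ⊓ n • b + a ⊓ b := inf_add_le_inf_add_inf ha (nsmul_nonneg hb n) hb
      _ ≤ n • (a ⊓ b) + a ⊓ b := add_le_add_left ih _

lemma IsLUB.inf_nonpos {S : Set E} {s a : E} (hs : IsLUB S s) (h : ∀ x ∈ S, a ⊓ x ≤ 0) :
    a ⊓ s ≤ 0 := by
  have hub : s ≤ a ⊔ s - a := hs.2 fun x hx => le_sub_iff_add_le.2 <|
    calc x + a = a ⊓ x + a ⊔ x := by rw [inf_add_sup, add_comm]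
      _ ≤ 0 + a ⊔ s := add_le_add (h x hx) (sup_le_sup_left (hs.1 hx) a)
      _ = a ⊔ s := zero_add _
  rw [eq_sub_of_add_eq (inf_add_sup a s), sub_nonpos, add_comm]
  exact le_sub_iff_add_le.1 hub

end LatticeGroup

lemma nonpos_of_forall_nsmul_le {E : Type*} [ConditionallyCompleteLattice E] [AddCommGroup E]
    [AddLeftMono E] {x c : E} (h : ∀ n : ℕ, n • x ≤ c) : x ≤ 0 := by
  have hs : IsLUB (Set.range fun n : ℕ => n • x) (sSup (Set.range fun n : ℕ => n • x)) :=
    isLUB_csSup (Set.range_nonempty _) ⟨c, Set.forall_mem_range.2 h⟩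
  have hshift : sSup (Set.range fun n : ℕ => n • x) + x ≤ sSup (Set.range fun n : ℕ => n • x) :=
    le_sub_iff_add_le.1 <| hs.2 <| Set.forall_mem_range.2 fun n =>
      le_sub_iff_add_le.2 (succ_nsmul x n ▸ hs.1 ⟨n + 1, rfl⟩)
  exact (add_le_iff_nonpos_right _).1 hshift

section BandProjection

variable {E : Type*} [ConditionallyCompleteLattice E] [AddCommGroup E] [Module ℝ E] {p f : E}

lemma isLUB_bandProj (p f : E) :
    IsLUB (Set.range fun n : ℕ => f ⊓ n • p) (bandProj p f) := by
  simp only [bandProj, Nat.cast_smul_eq_nsmul]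
  exact isLUB_csSup (Set.range_nonempty _) ⟨f, Set.forall_mem_range.2 fun _ => inf_le_left⟩

lemma bandProj_le (p f : E) : bandProj p f ≤ f :=
  (isLUB_bandProj p f).2 (Set.forall_mem_range.2 fun _ => inf_le_left)

lemma inf_le_bandProj (p f : E) : f ⊓ p ≤ bandProj p f :=
  (isLUB_bandProj p f).1 ⟨1, by simp⟩

lemma bandProj_nonneg (hf : 0 ≤ f) : 0 ≤ bandProj p f :=
  (isLUB_bandProj p f).1 ⟨0, by simpa using hf⟩

lemma inf_bandProj_eq_zero [AddLeftMono E] (hf : 0 ≤ f) (hp : 0 ≤ p) {x : E} (hx : 0 ≤ x)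
    (hxp : x ⊓ p = 0) : x ⊓ bandProj p f = 0 := by
  refine le_antisymm ((isLUB_bandProj p f).inf_nonpos ?_) (le_inf hx (bandProj_nonneg hf))
  rintro _ ⟨n, rfl⟩
  calc x ⊓ (f ⊓ n • p) ≤ x ⊓ n • p := inf_le_inf_left x inf_le_right
    _ ≤ n • (x ⊓ p) := inf_nsmul_le_nsmul_inf hx hp n
    _ = 0 := by rw [hxp, nsmul_zero]

lemma sub_bandProj_inf_eq_zero [AddLeftMono E] (hf : 0 ≤ f) (hp : 0 ≤ p) :
    (f - bandProj p f) ⊓ p = 0 := by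
  set d := (f - bandProj p f) ⊓ p
  have hd : ∀ n : ℕ, n • d ≤ f ⊓ n • p := by
    intro n
    induction n with
    | zero => simpa using hf
    | succ n ih =>
      rw [succ_nsmul, succ_nsmul]
      refine le_inf ?_ (add_le_add (ih.trans inf_le_right) inf_le_right)
      calc n • d + d ≤ bandProj p f + (f - bandProj p f) :=
            add_le_add (ih.trans ((isLUB_bandProj p f).1 ⟨n, rfl⟩)) inf_le_left
        _ = f := add_sub_cancel _ _
  exact le_antisymm (nonpos_of_forall_nsmul_le fun n => (hd n).trans inf_le_left)
    (le_inf (sub_nonneg.2 (bandProj_le p f)) hp)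

lemma isComponent_bandProj [AddLeftMono E] (hf : 0 ≤ f) (hp : 0 ≤ p) :
    IsComponent f (bandProj p f) := by
  refine ⟨bandProj_nonneg hf, bandProj_le p f, ?_⟩
  rw [inf_comm]
  exact inf_bandProj_eq_zero hf hp (sub_nonneg.2 (bandProj_le p f)) (sub_bandProj_inf_eq_zero hf hp)

lemma bandProj_posPart_sub_le [AddLeftMono E] {e v : E} (he : 0 ≤ e) (hv : 0 ≤ v) :
    bandProj (v - e)⁺ e ≤ v := by
  set p := bandProj (v - e)⁺ e
  have hdisj : (p - v)⁺ ⊓ (v - e)⁺ = 0 := by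
    refine le_antisymm ?_ (le_inf (posPart_nonneg _) (posPart_nonneg _))
    calc (p - v)⁺ ⊓ (v - e)⁺ ≤ (v - e)⁻ ⊓ (v - e)⁺ := by
          refine inf_le_inf_right _ ?_
          rw [← posPart_neg, neg_sub]
          exact posPart_mono (sub_le_sub_right (bandProj_le _ e) v)
      _ = 0 := by rw [inf_comm, posPart_inf_negPart_eq_zero]
  have hle : (p - v)⁺ ≤ p := sup_le (sub_le_self p hv) (bandProj_nonneg he)
  have hzero := inf_bandProj_eq_zero he (posPart_nonneg _) (posPart_nonneg _) hdisj
  rw [inf_eq_left.2 hle, posPart_eq_zero, sub_nonpos] at hzero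
  exact hzero

lemma exists_mem_span_isComponent_le_le_add [AddLeftMono E] {e : E} (he : 0 ≤ e) :
    ∀ (M : ℕ) {v : E}, 0 ≤ v → v ≤ M • e →
      ∃ s ∈ Submodule.span ℝ {p | IsComponent e p}, 0 ≤ s ∧ s ≤ v ∧ v ≤ s + e
  | 0, v, hv, hvM =>
    ⟨0, zero_mem _, le_rfl, hv, by rw [zero_add]; exact (hvM.trans (zero_nsmul e).le).trans he⟩
  | M + 1, v, hv, hvM => by
    set g := (v - e)⁺
    have hgM : g ≤ M • e :=
      sup_le (sub_le_iff_le_add.2 (succ_nsmul e M ▸ hvM)) (nsmul_nonneg he M)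
    obtain ⟨s, hs, hs0, hsg, hgs⟩ :=
      exists_mem_span_isComponent_le_le_add he M (posPart_nonneg _) hgM
    set p := bandProj g e
    have hv_eq : v ⊓ e + g = v := by rw [inf_eq_sub_posPart_sub, sub_add_cancel]
    refine ⟨s + p, add_mem hs (Submodule.subset_span (isComponent_bandProj he (posPart_nonneg _))),
      add_nonneg hs0 (bandProj_nonneg he), ?_, ?_⟩
    · calc s + p ≤ g + v ⊓ e :=
            add_le_add hsg (le_inf (bandProj_posPart_sub_le he hv) (bandProj_le g e))
        _ = v := by rw [add_comm, hv_eq]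
    · -- on the band of `g` the unit `e` coincides with `p`, so the error `g - s ≤ e` is below `p`
      have hgp : g ≤ s + p := sub_le_iff_le_add'.1 <|
        (le_inf (sub_le_iff_le_add'.2 hgs) (sub_le_self g hs0)).trans (inf_le_bandProj g e)
      calc v = v ⊓ e + g := hv_eq.symm
        _ ≤ e + (s + p) := add_le_add inf_le_right hgp
        _ = s + p + e := add_comm _ _

end BandProjection

namespace PreCEPS

variable {E : Type*} [ConditionallyCompleteLattice E] [AddCommGroup E] [Module ℝ E]
  (A : PreCEPS E)

lemma S_mono : Monotone A.S := fun x y hxy => by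
  rw [← sup_eq_right.2 hxy, A.S_sup]
  exact le_sup_left

lemma S_nonneg {x : E} (hx : 0 ≤ x) : 0 ≤ A.S x :=
  map_zero A.S ▸ A.S_mono hx

lemma S_inf [AddLeftMono E] (x y : E) : A.S (x ⊓ y) = A.S x ⊓ A.S y := by
  rw [eq_sub_of_add_eq (inf_add_sup x y), map_sub, map_add, A.S_sup,
    eq_sub_of_add_eq (inf_add_sup (A.S x) (A.S y))]

lemma T_mono [AddLeftMono E] : Monotone A.T := fun x y hxy =>
  sub_nonneg.1 (map_sub A.T y x ▸ A.T_pos (y - x) (sub_nonneg.2 hxy))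

lemma T_le_e [AddLeftMono E] {x : E} (hx : x ≤ A.e) : A.T x ≤ A.e :=
  A.T_e ▸ A.T_mono hx

lemma isLUB_inf_nsmul_e [AddLeftMono E] {f : E} (hf : 0 ≤ f) :
    IsLUB (Set.range fun n : ℕ => f ⊓ n • A.e) f := by
  have hproj : f - bandProj A.e f = 0 := by
    refine A.weakUnit _ ?_
    rw [abs_of_nonneg (sub_nonneg.2 (bandProj_le _ _)), inf_comm]
    exact sub_bandProj_inf_eq_zero hf A.e_pos.le
  have hlub := isLUB_bandProj A.e f
  rwa [← sub_eq_zero.1 hproj] at hlub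

variable {A}

lemma TS_eq_T_of_nonneg_of_le_nsmul [AddLeftMono E]
    (h : ∀ p : E, IsComponent A.e p → A.T (A.S p) = A.T p) {f : E} (hf : 0 ≤ f) {K : ℕ}
    (hfK : f ≤ K • A.e) : A.T (A.S f) = A.T f := by
  set D : E →ₗ[ℝ] E := A.T ∘ₗ A.S - A.T
  have hD_span : ∀ s ∈ Submodule.span ℝ {p | IsComponent A.e p}, D s = 0 := fun s hs =>
    sub_eq_zero.2 (LinearMap.eqOn_span' (f := A.T ∘ₗ A.S) (g := A.T) h hs)
  -- `N • D f = D w` for some `0 ≤ w ≤ e`, where `T S w` and `T w` both lie in `[0, e]`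
  have hbound : ∀ N : ℕ, N • D f ≤ A.e ∧ N • -D f ≤ A.e := by
    intro N
    obtain ⟨s, hs, -, hsf, hfs⟩ := exists_mem_span_isComponent_le_le_add A.e_pos.le (N * K)
      (nsmul_nonneg hf N) (by rw [mul_comm, mul_nsmul]; exact nsmul_le_nsmul_right hfK N)
    set w := N • f - s
    have hw0 : 0 ≤ w := sub_nonneg.2 hsf
    have hwe : w ≤ A.e := sub_le_iff_le_add'.2 hfs
    have hND : N • D f = A.T (A.S w) - A.T w := by
      rw [← map_nsmul, ← add_sub_cancel s (N • f), map_add, hD_span s hs, zero_add]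
      rfl
    rw [smul_neg, hND, neg_sub]
    exact ⟨(sub_le_self _ (A.T_pos w hw0)).trans (A.T_le_e (A.S_e ▸ A.S_mono hwe)),
      (sub_le_self _ (A.T_pos _ (A.S_nonneg hw0))).trans (A.T_le_e hwe)⟩
  have hDf : D f = 0 := le_antisymm (nonpos_of_forall_nsmul_le fun N => (hbound N).1)
    (neg_nonpos.1 (nonpos_of_forall_nsmul_le fun N => (hbound N).2))
  exact sub_eq_zero.1 hDf

lemma TS_eq_T_of_nonneg [AddLeftMono E]
    (h : ∀ p : E, IsComponent A.e p → A.T (A.S p) = A.T p) {f : E} (hf : 0 ≤ f) :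
    A.T (A.S f) = A.T f := by
  have he : 0 ≤ A.e := A.e_pos.le
  have hT {g : E} (hg : 0 ≤ g) :
      IsLUB (A.T '' Set.range fun n : ℕ => g ⊓ n • A.e) (A.T g) :=
    A.T_oc _ _ (Set.range_nonempty _)
      (directedOn_range.2 (show Monotone fun n : ℕ => g ⊓ n • A.e from
        fun _ _ hmn => inf_le_inf_left g (nsmul_le_nsmul_left he hmn)).directed_le)
      (A.isLUB_inf_nsmul_e hg)
  have hrange : (A.T '' Set.range fun n : ℕ => A.S f ⊓ n • A.e) =
      A.T '' Set.range fun n : ℕ => f ⊓ n • A.e := by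
    simp only [← Set.range_comp, Function.comp_def]
    congr! 2 with n
    rw [show A.S f ⊓ n • A.e = A.S (f ⊓ n • A.e) by rw [A.S_inf, map_nsmul, A.S_e]]
    exact TS_eq_T_of_nonneg_of_le_nsmul h (le_inf hf (nsmul_nonneg he n)) inf_le_right
  exact (hrange ▸ hT (A.S_nonneg hf)).unique (hT hf)

end PreCEPS

/-- if `T S p = T p` holds for all components `p` of `e`, then
`T S f = T f` for all `f ∈ E`. -/
theorem TS_eq_T_of_components
    {E : Type*} [ConditionallyCompleteLattice E] [AddCommGroup E] [Module ℝ E]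
    [CovariantClass E E (· + ·) (· ≤ ·)]
    (A : PreCEPS E)
    (h : ∀ p : E, IsComponent A.e p → A.T (A.S p) = A.T p) :
    ∀ f : E, A.T (A.S f) = A.T f := by
  intro f
  rw [← posPart_sub_negPart f, map_sub, map_sub, map_sub,
    PreCEPS.TS_eq_T_of_nonneg h (posPart_nonneg f), PreCEPS.TS_eq_T_of_nonneg h (negPart_nonneg f)]
end
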